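/- arXiv:2504.18208 — 3 statements merged into one kernel-verified Lean document; each statement's English description precedes it below -/
import Mathlib

section
/- Let Ω be a compact metric space, let ν be a nonzero finite signed Borel measure on Ω with total variation norm ‖ν‖_TV, and let r > 1. Then ‖ν‖_TV^r = inf over Borel probability measures μ on Ω with ν ≪ μ of ∫_Ω |dν/dμ|^r dμ, and the infimum is attained at μ = |ν| / ‖ν‖_TV, where |ν| is the total variation measure of ν. -/
open MeasureTheory Filter Topology
open scoped ENNReal

/-!
If `ν = μ.withDensityᵥ g`, the Jordan decomposition of `ν` is `(g⁺ μ, g⁻ μ)`, so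
`‖ν‖_TV = ∫ |g| dμ`; on a probability space `(∫ |g| dμ)^r ≤ ∫ |g|^r dμ` (the `L¹` norm is
dominated by the `Lʳ` norm). Equality holds for `μ = |ν| / ‖ν‖_TV` with density `‖ν‖_TV · σ`,
where `σ = ±1` is the sign given by a Hahn decomposition of `ν`, since then `|g|` is constant.
-/

lemma ENNReal.rpow_lintegral_le_lintegral_rpow {α : Type*} [MeasurableSpace α] {μ : Measure α}
    [IsProbabilityMeasure μ] {f : α → ℝ≥0∞} (hf : AEMeasurable f μ) {r : ℝ} (hr : 1 ≤ r) :
    (∫⁻ x, f x ∂μ) ^ r ≤ ∫⁻ x, f x ^ r ∂μ := by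
  have hr0 : 0 < r := zero_lt_one.trans_le hr
  have h := eLpNorm_le_eLpNorm_of_exponent_le (μ := μ) (ENNReal.one_le_ofReal.2 hr)
    hf.aestronglyMeasurable
  rw [eLpNorm_one_eq_lintegral_enorm,
    eLpNorm_eq_lintegral_rpow_enorm_toReal (by simpa using hr0) ENNReal.ofReal_ne_top,
    ENNReal.toReal_ofReal hr0.le] at h
  simp only [enorm_eq_self] at h
  calc (∫⁻ x, f x ∂μ) ^ r ≤ ((∫⁻ x, f x ^ r ∂μ) ^ (1 / r)) ^ r :=
        ENNReal.rpow_le_rpow h hr0.le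
    _ = ∫⁻ x, f x ^ r ∂μ := by
        rw [← ENNReal.rpow_mul, one_div, inv_mul_cancel₀ hr0.ne', ENNReal.rpow_one]

lemma ENNReal.ofReal_add_ofReal_neg (a : ℝ) :
    ENNReal.ofReal a + ENNReal.ofReal (-a) = ENNReal.ofReal |a| := by
  rcases le_total 0 a with h | h
  · rw [ENNReal.ofReal_of_nonpos (neg_nonpos.2 h), add_zero, abs_of_nonneg h]
  · rw [ENNReal.ofReal_of_nonpos h, zero_add, abs_of_nonpos h]

namespace MeasureTheory

variable {α : Type*} [MeasurableSpace α]

lemma withDensityᵥ_smul_measure {μ : Measure α} {f : α → ℝ} (hf : Integrable f μ)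
    {c : ℝ≥0∞} (hc : c ≠ ∞) : (c • μ).withDensityᵥ f = c.toReal • μ.withDensityᵥ f := by
  ext i hi
  rw [withDensityᵥ_apply (hf.smul_measure hc) hi, _root_.smul_apply,
    withDensityᵥ_apply hf hi, Measure.restrict_smul, integral_smul_measure, smul_eq_mul]

namespace SignedMeasure

lemma totalVariation_eq_zero_iff {s : SignedMeasure α} : s.totalVariation = 0 ↔ s = 0 := by
  refine ⟨fun h ↦ ?_, fun h ↦ h ▸ totalVariation_zero⟩
  ext i hi
  exact s.null_of_totalVariation_zero (by simp [h])

lemma totalVariation_withDensityᵥ_of_measurable {μ : Measure α} [IsFiniteMeasure μ] {g : α → ℝ}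
    (hgm : Measurable g) (hg : Integrable g μ) :
    totalVariation (μ.withDensityᵥ g) = μ.withDensity fun x ↦ ENNReal.ofReal |g x| := by
  rw [totalVariation, toJordanDecomposition_eq_of_eq_add_withDensity hgm hg
    VectorMeasure.MutuallySingular.zero_left (zero_add _).symm]
  simp only [toJordanDecomposition_zero, JordanDecomposition.zero_posPart,
    JordanDecomposition.zero_negPart, zero_add]
  rw [← withDensity_add_left (by fun_prop)]
  congr with x
  exact ENNReal.ofReal_add_ofReal_neg (g x)

lemma totalVariation_withDensityᵥ {μ : Measure α} [IsFiniteMeasure μ] {g : α → ℝ}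
    (hg : Integrable g μ) :
    totalVariation (μ.withDensityᵥ g) = μ.withDensity fun x ↦ ENNReal.ofReal |g x| := by
  have hgg' : g =ᵐ[μ] hg.aestronglyMeasurable.mk g := hg.aestronglyMeasurable.ae_eq_mk
  rw [WithDensityᵥEq.congr_ae hgg', totalVariation_withDensityᵥ_of_measurable
    hg.aestronglyMeasurable.stronglyMeasurable_mk.measurable (hg.congr hgg')]
  exact withDensity_congr_ae (hgg'.mono fun x hx ↦ by simp only [hx])

lemma totalVariation_withDensityᵥ_univ_rpow_le {μ : Measure α} [IsProbabilityMeasure μ]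
    {g : α → ℝ} (hg : Integrable g μ) {r : ℝ} (hr : 1 ≤ r) :
    totalVariation (μ.withDensityᵥ g) Set.univ ^ r ≤ ∫⁻ x, ENNReal.ofReal (|g x| ^ r) ∂μ := by
  rw [totalVariation_withDensityᵥ hg, withDensity_apply _ MeasurableSet.univ,
    Measure.restrict_univ]
  refine (ENNReal.rpow_lintegral_le_lintegral_rpow hg.aemeasurable.abs.ennreal_ofReal hr).trans
    (le_of_eq (lintegral_congr fun x ↦ ?_))
  exact ENNReal.ofReal_rpow_of_nonneg (abs_nonneg _) (zero_le_one.trans hr)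

lemma exists_abs_eq_one_withDensityᵥ_totalVariation_eq (s : SignedMeasure α) :
    ∃ g : α → ℝ, Measurable g ∧ (∀ x, |g x| = 1) ∧ s.totalVariation.withDensityᵥ g = s := by
  classical
  obtain ⟨S, hSm, hPS, hNS⟩ := s.toJordanDecomposition.mutuallySingular
  set P := s.toJordanDecomposition.posPart
  set N := s.toJordanDecomposition.negPart
  set g : α → ℝ := fun x ↦ if x ∈ S then -1 else 1
  have hgm : Measurable g := Measurable.ite hSm measurable_const measurable_const
  have habs : ∀ x, |g x| = 1 := fun x ↦ by by_cases hx : x ∈ S <;> simp [g, hx]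
  have hgi : ∀ (μ : Measure α) [IsFiniteMeasure μ], Integrable g μ := fun μ _ ↦
    .of_bound hgm.aestronglyMeasurable 1 (ae_of_all _ fun x ↦ (habs x).le)
  refine ⟨g, hgm, habs, ?_⟩
  ext i hi
  have hP : ∫ x in i, g x ∂P = P.real i := by
    have : g =ᵐ[P.restrict i] fun _ ↦ 1 := ae_restrict_of_ae <|
      (measure_eq_zero_iff_ae_notMem.1 hPS).mono fun x hx ↦ if_neg hx
    simp [integral_congr_ae this]
  have hN : ∫ x in i, g x ∂N = -N.real i := by
    have : g =ᵐ[N.restrict i] fun _ ↦ -1 := ae_restrict_of_ae <|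
      (measure_eq_zero_iff_ae_notMem.1 hNS).mono fun x hx ↦ if_pos (not_not.1 hx)
    simp [integral_congr_ae this]
  rw [withDensityᵥ_apply (hgi _) hi, totalVariation, Measure.restrict_add,
    integral_add_measure (hgi _) (hgi _), hP, hN,
    s.apply_eq_posPart_real_sub_negPart_real hi, sub_eq_add_neg]

end SignedMeasure

end MeasureTheory

theorem stmt_6_general
    {Ω : Type*} [MeasurableSpace Ω]
    (ν : SignedMeasure Ω) (hν : ν ≠ 0)
    (r : ℝ) (hr : 1 < r)
    (tv : ℝ) (htv : tv = (ν.totalVariation Set.univ).toReal) :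
    -- lower bound: for every μ ∈ P(Ω) and every density g of ν w.r.t. μ
    (∀ μ : Measure Ω, IsProbabilityMeasure μ →
      ∀ g : Ω → ℝ, Integrable g μ → μ.withDensityᵥ g = ν →
        ENNReal.ofReal (tv ^ r) ≤ ∫⁻ ω, ENNReal.ofReal (|g ω| ^ r) ∂μ)
    ∧
    -- attainment at μ = |ν| / ‖ν‖_TV
    (IsProbabilityMeasure ((ENNReal.ofReal tv)⁻¹ • ν.totalVariation) ∧
      ∃ g : Ω → ℝ,
        Integrable g ((ENNReal.ofReal tv)⁻¹ • ν.totalVariation) ∧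
        ((ENNReal.ofReal tv)⁻¹ • ν.totalVariation).withDensityᵥ g = ν ∧
        (∫⁻ ω, ENNReal.ofReal (|g ω| ^ r) ∂((ENNReal.ofReal tv)⁻¹ • ν.totalVariation))
          = ENNReal.ofReal (tv ^ r)) := by
  have hT : ν.totalVariation Set.univ ≠ 0 := by
    rwa [Ne, Measure.measure_univ_eq_zero, SignedMeasure.totalVariation_eq_zero_iff]
  have hfin : ν.totalVariation Set.univ ≠ ∞ := measure_ne_top _ _
  have htv0 : 0 < tv := htv ▸ ENNReal.toReal_pos hT hfin
  have hofReal : ENNReal.ofReal tv = ν.totalVariation Set.univ := htv ▸ ENNReal.ofReal_toReal hfin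
  have hr0 : 0 ≤ r := zero_le_one.trans hr.le
  rw [← ENNReal.ofReal_rpow_of_nonneg htv0.le hr0, hofReal]
  refine ⟨fun μ _ g hg hgν ↦ ?_, ?_⟩
  · rw [← hgν]
    exact SignedMeasure.totalVariation_withDensityᵥ_univ_rpow_le hg hr.le
  have : NeZero ν.totalVariation := ⟨fun h ↦ hT (by simp [h])⟩
  obtain ⟨g, hgm, habs, hgν⟩ := ν.exists_abs_eq_one_withDensityᵥ_totalVariation_eq
  have hgi : Integrable g ν.totalVariation :=
    .of_bound hgm.aestronglyMeasurable 1 (ae_of_all _ fun x ↦ (habs x).le)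
  have hc : (ν.totalVariation Set.univ)⁻¹ ≠ ∞ := ENNReal.inv_ne_top.2 hT
  refine ⟨inferInstance, tv • g, (hgi.smul_measure hc).smul tv, ?_, ?_⟩
  · rw [withDensityᵥ_smul_measure (hgi.smul tv) hc, withDensityᵥ_smul, hgν, smul_smul,
      ENNReal.toReal_inv, ← hofReal, ENNReal.toReal_ofReal htv0.le, inv_mul_cancel₀ htv0.ne',
      one_smul]
  · have hconst : ∀ x, ENNReal.ofReal (|(tv • g) x| ^ r) = ν.totalVariation Set.univ ^ r :=
      fun x ↦ by rw [Pi.smul_apply, smul_eq_mul, abs_mul, habs, mul_one, abs_of_pos htv0,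
        ← ENNReal.ofReal_rpow_of_nonneg htv0.le hr0, hofReal]
    rw [lintegral_congr hconst, lintegral_const,
      measure_univ (μ := (ν.totalVariation Set.univ)⁻¹ • ν.totalVariation), mul_one]

/-- Variational representation of the total variation norm:
`‖ν‖_TV^r = inf { ∫ |dν/dμ|^r dμ : μ ∈ P(Ω), ν ≪ μ }`, attained at `μ = |ν|/‖ν‖_TV`. -/
theorem stmt_6
    {Ω : Type*} [MetricSpace Ω] [CompactSpace Ω] [MeasurableSpace Ω] [BorelSpace Ω]
    (ν : SignedMeasure Ω) (hν : ν ≠ 0)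
    (r : ℝ) (hr : 1 < r)
    (tv : ℝ) (htv : tv = (ν.totalVariation Set.univ).toReal) :
    -- lower bound: for every μ ∈ P(Ω) and every density g of ν w.r.t. μ
    (∀ μ : Measure Ω, IsProbabilityMeasure μ →
      ∀ g : Ω → ℝ, Integrable g μ → μ.withDensityᵥ g = ν →
        ENNReal.ofReal (tv ^ r) ≤ ∫⁻ ω, ENNReal.ofReal (|g ω| ^ r) ∂μ)
    ∧
    -- attainment at μ = |ν| / ‖ν‖_TV
    (IsProbabilityMeasure ((ENNReal.ofReal tv)⁻¹ • ν.totalVariation) ∧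
      ∃ g : Ω → ℝ,
        Integrable g ((ENNReal.ofReal tv)⁻¹ • ν.totalVariation) ∧
        ((ENNReal.ofReal tv)⁻¹ • ν.totalVariation).withDensityᵥ g = ν ∧
        (∫⁻ ω, ENNReal.ofReal (|g ω| ^ r) ∂((ENNReal.ofReal tv)⁻¹ • ν.totalVariation))
          = ENNReal.ofReal (tv ^ r)) :=
  stmt_6_general ν hν r hr tv htv
end

section
/- Under the teacher–student assumption (TS) and assumption (A) on f, for every Borel probability measure μ on Ω one has L^0_f(μ) = D_f(ν̄|μ), that is: L^0_f(μ) = ∫_Ω f(dν̄/dμ) dμ if ν̄ ≪ μ, and L^0_f(μ) = +∞ otherwise. -/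
open MeasureTheory Filter Topology
open scoped ENNReal

/-- The divergence `D_f(ν|μ)` (infimum over integrable densities of `ν` w.r.t. `μ`;
`+∞` when `ν` is not absolutely continuous w.r.t. `μ`). -/
noncomputable def Df {Ω : Type*} [MeasurableSpace Ω] (f : ℝ → ℝ)
    (ν : MeasureTheory.SignedMeasure Ω) (μ : MeasureTheory.Measure Ω) : ℝ≥0∞ :=
  ⨅ (g : Ω → ℝ) (_ : MeasureTheory.Integrable g μ ∧ μ.withDensityᵥ g = ν),
    ∫⁻ ω, ENNReal.ofReal (f (g ω)) ∂μ

/-- The operator `Φ⋆ : M(Ω) → L²(ρ)`. -/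
noncomputable def phiStar {Ω : Type*} [MeasurableSpace Ω] {d : ℕ}
    (φ : Ω → EuclideanSpace ℝ (Fin d) → ℝ) (ν : MeasureTheory.SignedMeasure Ω)
    (x : EuclideanSpace ℝ (Fin d)) : ℝ :=
  (∫ ω, φ ω x ∂ν.toJordanDecomposition.posPart)
    - ∫ ω, φ ω x ∂ν.toJordanDecomposition.negPart

/-! For `u ∈ L¹(μ)`, integrating a bounded continuous `φ(·, x)` against the Jordan parts of the
measure `u μ` gives `∫ φ(ω, x) u(ω) dμ`, so `Φ_μ u = Φ⋆(u μ)`. Injectivity of `Φ⋆` then turns the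
constraint `Φ_μ u = Y = Φ⋆ ν̄` into `u μ = ν̄`: both infima run over the densities of `ν̄`. -/

namespace MeasureTheory

variable {Ω : Type*} [MeasurableSpace Ω] {μ : Measure Ω} {u : Ω → ℝ}

lemma SignedMeasure.toJordanDecomposition_withDensityᵥ (hum : Measurable u)
    (hu : Integrable u μ) :
    (toJordanDecomposition (μ.withDensityᵥ u)).posPart =
        μ.withDensity (fun ω => .ofReal (u ω)) ∧
      (toJordanDecomposition (μ.withDensityᵥ u)).negPart =
        μ.withDensity (fun ω => .ofReal (-u ω)) := by
  rw [toJordanDecomposition_eq_of_eq_add_withDensity (t := 0) hum hu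
    VectorMeasure.MutuallySingular.zero_left (zero_add _).symm]
  simp only [toJordanDecomposition_zero, JordanDecomposition.zero_posPart,
    JordanDecomposition.zero_negPart, zero_add, and_self]

lemma integral_withDensity_ofReal (hum : Measurable u) (g : Ω → ℝ) :
    ∫ ω, g ω ∂μ.withDensity (fun ω => .ofReal (u ω)) = ∫ ω, max (u ω) 0 * g ω ∂μ := by
  rw [integral_withDensity_eq_integral_toReal_smul (by fun_prop)
    (ae_of_all _ fun _ => ENNReal.ofReal_lt_top)]
  simp only [ENNReal.toReal_ofReal', smul_eq_mul]

lemma integral_posPart_sub_integral_negPart_withDensityᵥ (hu : Integrable u μ)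
    {g : Ω → ℝ} (hg : AEStronglyMeasurable g μ) {C : ℝ} (hgC : ∀ ω, ‖g ω‖ ≤ C) :
    ∫ ω, g ω ∂(SignedMeasure.toJordanDecomposition (μ.withDensityᵥ u)).posPart
      - ∫ ω, g ω ∂(SignedMeasure.toJordanDecomposition (μ.withDensityᵥ u)).negPart
      = ∫ ω, g ω * u ω ∂μ := by
  obtain ⟨v, hvm, huv⟩ := hu.aemeasurable
  have hv : Integrable v μ := hu.congr huv
  obtain ⟨hpos, hneg⟩ := SignedMeasure.toJordanDecomposition_withDensityᵥ hvm hv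
  have hbdd : ∀ᵐ ω ∂μ, ‖g ω‖ ≤ C := ae_of_all _ hgC
  have hpos_int : Integrable (fun ω => max (v ω) 0 * g ω) μ := hv.pos_part.mul_bdd hg hbdd
  have hneg_int : Integrable (fun ω => max (-v ω) 0 * g ω) μ := hv.neg.pos_part.mul_bdd hg hbdd
  rw [WithDensityᵥEq.congr_ae huv, hpos, hneg, integral_withDensity_ofReal hvm,
    integral_withDensity_ofReal (u := fun ω => -v ω) hvm.neg,
    ← integral_sub hpos_int hneg_int]
  refine integral_congr_ae (huv.mono fun ω hω => ?_)
  dsimp only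
  rw [← sub_mul, max_zero_sub_max_neg_zero_eq_self, hω, mul_comm]

end MeasureTheory

section

variable {Ω : Type*} [TopologicalSpace Ω] [CompactSpace Ω] [MeasurableSpace Ω]
  [OpensMeasurableSpace Ω] {d : ℕ} {φ : Ω → EuclideanSpace ℝ (Fin d) → ℝ} {μ : Measure Ω}
  {u : Ω → ℝ}

lemma phiStar_withDensityᵥ_apply {x : EuclideanSpace ℝ (Fin d)}
    (hx : Continuous fun ω => φ ω x) (hu : Integrable u μ) :
    phiStar φ (μ.withDensityᵥ u) x = ∫ ω, φ ω x * u ω ∂μ := by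
  obtain ⟨C, hC⟩ := isCompact_univ.exists_bound_of_continuousOn hx.continuousOn
  exact integral_posPart_sub_integral_negPart_withDensityᵥ hu hx.aestronglyMeasurable
    fun ω => hC ω (Set.mem_univ ω)

lemma phiStar_withDensityᵥ_ae_eq {ρ : Measure (EuclideanSpace ℝ (Fin d))}
    (hφ_cont : ∀ᵐ x ∂ρ, Continuous fun ω => φ ω x) (hu : Integrable u μ) :
    phiStar φ (μ.withDensityᵥ u) =ᵐ[ρ] fun x => ∫ ω, φ ω x * u ω ∂μ := by
  filter_upwards [hφ_cont] with x hx
  exact phiStar_withDensityᵥ_apply hx hu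

lemma phiStar_withDensityᵥ_ae_eq_iff {ρ : Measure (EuclideanSpace ℝ (Fin d))}
    (hφ_cont : ∀ᵐ x ∂ρ, Continuous fun ω => φ ω x) {Y : EuclideanSpace ℝ (Fin d) → ℝ}
    {ν : SignedMeasure Ω} (hν : phiStar φ ν =ᵐ[ρ] Y)
    (hinj : ∀ ν₁ ν₂ : SignedMeasure Ω, phiStar φ ν₁ =ᵐ[ρ] phiStar φ ν₂ → ν₁ = ν₂)
    (hu : Integrable u μ) :
    (fun x => ∫ ω, φ ω x * u ω ∂μ) =ᵐ[ρ] Y ↔ μ.withDensityᵥ u = ν := by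
  have hΦ := phiStar_withDensityᵥ_ae_eq hφ_cont hu
  constructor
  · intro hY
    exact hinj _ _ ((hΦ.trans hY).trans hν.symm)
  · rintro rfl
    exact hΦ.symm.trans hν

end

theorem stmt_10_general
    {Ω : Type*} [MetricSpace Ω] [CompactSpace Ω] [MeasurableSpace Ω] [BorelSpace Ω]
    {d : ℕ}
    (μ : Measure Ω)
    (ρ : Measure (EuclideanSpace ℝ (Fin d)))
    (Y : EuclideanSpace ℝ (Fin d) → ℝ)
    (φ : Ω → EuclideanSpace ℝ (Fin d) → ℝ)
    (hφ_cont : ∀ᵐ x ∂ρ, Continuous fun ω => φ ω x)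
    (f : ℝ → ℝ)
    -- teacher–student assumption (TS)
    (νbar : SignedMeasure Ω)
    (hTS : phiStar φ νbar =ᵐ[ρ] Y)
    (hinj : ∀ ν₁ ν₂ : SignedMeasure Ω,
      phiStar φ ν₁ =ᵐ[ρ] phiStar φ ν₂ → ν₁ = ν₂) :
    (⨅ (u : Ω → ℝ)
        (_ : Integrable u μ ∧ (fun x => ∫ ω, φ ω x * u ω ∂μ) =ᵐ[ρ] Y),
        ∫⁻ ω, ENNReal.ofReal (f (u ω)) ∂μ)
      = Df f νbar μ := by
  rw [Df]
  refine iInf_congr fun u => iInf_congr_Prop (and_congr_right fun hu => ?_) fun _ => rfl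
  exact phiStar_withDensityᵥ_ae_eq_iff hφ_cont hTS hinj hu

/-- Under (TS) and (A), `L⁰_f(μ) = D_f(ν̄|μ)` for every
probability measure `μ` on `Ω`. -/
theorem stmt_10
    {Ω : Type*} [MetricSpace Ω] [CompactSpace Ω] [MeasurableSpace Ω] [BorelSpace Ω]
    {d : ℕ}
    (μ : Measure Ω) [IsProbabilityMeasure μ]
    (ρ : Measure (EuclideanSpace ℝ (Fin d))) [IsProbabilityMeasure ρ]
    (Y : EuclideanSpace ℝ (Fin d) → ℝ) (hY : MemLp Y 2 ρ)
    (φ : Ω → EuclideanSpace ℝ (Fin d) → ℝ)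
    (hφ_meas : Measurable (Function.uncurry φ))
    (hφ_cont : ∀ᵐ x ∂ρ, Continuous fun ω => φ ω x)
    (hφ_int : Integrable (fun x => (⨆ ω, |φ ω x|) ^ 2) ρ)
    (f : ℝ → ℝ)
    (hf_nonneg : ∀ t, 0 ≤ f t)
    (hf_conv : StrictConvexOn ℝ Set.univ f)
    (hf_super : Tendsto (fun t : ℝ => f t / |t|) (cocompact ℝ) atTop)
    -- teacher–student assumption (TS)
    (νbar : SignedMeasure Ω)
    (hTS : phiStar φ νbar =ᵐ[ρ] Y)
    (hinj : ∀ ν₁ ν₂ : SignedMeasure Ω,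
      phiStar φ ν₁ =ᵐ[ρ] phiStar φ ν₂ → ν₁ = ν₂) :
    (⨅ (u : Ω → ℝ)
        (_ : Integrable u μ ∧ (fun x => ∫ ω, φ ω x * u ω ∂μ) =ᵐ[ρ] Y),
        ∫⁻ ω, ENNReal.ofReal (f (u ω)) ∂μ)
      = Df f νbar μ :=
  stmt_10_general μ ρ Y φ hφ_cont f νbar hTS hinj
end

section
/- Assume f satisfies (A) and φ has the stated integrability, and let λ > 0 and μ be a Borel probability measure on Ω. Then the unique maximizer α^λ_f[μ] of α ↦ −∫_Ω f*(Φ^⊤α) dμ + ⟨α, Y⟩_{L²(ρ)} − (λ/2)‖α‖²_{L²(ρ)} over L²(ρ) satisfies ‖α^λ_f[μ]‖_{L²(ρ)} ≤ λ^{-1} (‖Y‖²_{L²(ρ)} + 2λ f(0))^{1/2}. -/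
/-!
For `c ∈ (0, 1)`, maximality gives `D (c • α₀) ≤ D α₀`. Since `f*` is convex with
`f* 0 = -inf f ≤ 0`, the term `∫ f* (c Φᵀα₀) dμ` is at most `c ∫ f* (Φᵀα₀) dμ`, so
`c ↦ c (⟨α₀, Y⟩ - ∫ f*(Φᵀα₀) dμ) - (λ/2) c² ‖α₀‖²` is maximal at `c = 1` among `c ∈ (0, 1]`;
its left derivative at `1` is therefore nonnegative, and with `f* ≥ -f 0` this reads
`λ ‖α₀‖² ≤ ⟨α₀, Y⟩ + f 0`. Young's inequality `⟨α₀, Y⟩ ≤ (λ/2) ‖α₀‖² + (2λ)⁻¹ ‖Y‖²`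
then yields `λ² ‖α₀‖² ≤ ‖Y‖² + 2λ f 0`.
-/

open MeasureTheory Filter Topology Set

/-- The convex conjugate `f*`. In `ℝ`, `⨆` of a family that is not bounded above is `0`, hence
the boundedness hypotheses below; superlinearity of `f` supplies them. -/
noncomputable def legendreTransform (f : ℝ → ℝ) (s : ℝ) : ℝ := ⨆ t, s * t - f t

section LegendreTransform

variable {f : ℝ → ℝ}

lemma bddAbove_range_mul_sub_of_superlinear (hf_nonneg : ∀ t, 0 ≤ f t)
    (hf_super : Tendsto (fun t => f t / |t|) (cocompact ℝ) atTop) (s : ℝ) :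
    BddAbove (range fun t => s * t - f t) := by
  obtain ⟨K, hK, hKs⟩ := mem_cocompact.1 (hf_super.eventually_ge_atTop |s|)
  obtain ⟨C, hC⟩ := (hK.image (continuous_const_mul s)).bddAbove
  refine ⟨max C 0, ?_⟩
  rintro _ ⟨t, rfl⟩
  by_cases ht : t ∈ K
  · exact le_max_of_le_left (by linarith [hf_nonneg t, hC ⟨t, ht, rfl⟩])
  · have hst : s * t ≤ f t := by
      rcases eq_or_ne t 0 with rfl | ht0
      · simp [hf_nonneg 0]
      · calc s * t ≤ |s| * |t| := (le_abs_self _).trans (abs_mul s t).le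
          _ ≤ f t := (le_div_iff₀ (abs_pos.2 ht0)).1 (hKs ht)
    exact le_max_of_le_right (by linarith)

lemma mul_sub_le_legendreTransform (hbdd : ∀ s, BddAbove (range fun t => s * t - f t))
    (s t : ℝ) : s * t - f t ≤ legendreTransform f s :=
  le_ciSup (hbdd s) t

lemma legendreTransform_zero_nonpos (hf_nonneg : ∀ t, 0 ≤ f t) : legendreTransform f 0 ≤ 0 :=
  ciSup_le fun t => by simpa using hf_nonneg t

lemma convexOn_legendreTransform (hbdd : ∀ s, BddAbove (range fun t => s * t - f t)) :
    ConvexOn ℝ univ (legendreTransform f) := by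
  refine ⟨convex_univ, fun x _ y _ a b ha hb hab => ciSup_le fun t => ?_⟩
  calc (a • x + b • y) * t - f t = a * (x * t - f t) + b * (y * t - f t) := by
        simp only [smul_eq_mul]; linear_combination (f t) * hab
    _ ≤ a * legendreTransform f x + b * legendreTransform f y := by
        gcongr <;> exact mul_sub_le_legendreTransform hbdd _ _

lemma continuous_legendreTransform (hbdd : ∀ s, BddAbove (range fun t => s * t - f t)) :
    Continuous (legendreTransform f) :=
  continuousOn_univ.1 ((convexOn_legendreTransform hbdd).continuousOn isOpen_univ)

end LegendreTransform

lemma integral_comp_mul_le_of_convexOn {X : Type*} [MeasurableSpace X] {μ : Measure X}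
    {g : ℝ → ℝ} (hg : ConvexOn ℝ univ g) (hg0 : g 0 ≤ 0) {u : X → ℝ} {c : ℝ}
    (hc0 : 0 ≤ c) (hc1 : c ≤ 1) (hu : Integrable (fun x => g (u x)) μ)
    (hcu : Integrable (fun x => g (c * u x)) μ) :
    ∫ x, g (c * u x) ∂μ ≤ c * ∫ x, g (u x) ∂μ := by
  rw [← integral_const_mul]
  refine integral_mono hcu (hu.const_mul c) fun x => ?_
  calc g (c * u x) = g ((1 - c) • 0 + c • u x) := by simp
    _ ≤ (1 - c) • g 0 + c • g (u x) :=
        hg.2 (mem_univ _) (mem_univ _) (by linarith) hc0 (by ring)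
    _ ≤ c * g (u x) := by
        simp only [smul_eq_mul]; nlinarith [mul_nonneg (sub_nonneg.2 hc1) (neg_nonneg.2 hg0)]

lemma integral_mul_le_of_memLp_two {E : Type*} [MeasurableSpace E] {ρ : Measure E}
    {a b : E → ℝ} (ha : MemLp a 2 ρ) (hb : MemLp b 2 ρ) {lam : ℝ} (hlam : 0 < lam) :
    ∫ x, a x * b x ∂ρ ≤ lam / 2 * ∫ x, a x ^ 2 ∂ρ + (2 * lam)⁻¹ * ∫ x, b x ^ 2 ∂ρ := by
  have ha2 := ((memLp_two_iff_integrable_sq ha.1).1 ha).const_mul (lam / 2)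
  have hb2 := ((memLp_two_iff_integrable_sq hb.1).1 hb).const_mul (2 * lam)⁻¹
  rw [← integral_const_mul, ← integral_const_mul, ← integral_add ha2 hb2]
  refine integral_mono (ha.integrable_mul hb) (ha2.add hb2) fun x => ?_
  simp only
  field_simp
  nlinarith [sq_nonneg (lam * a x - b x)]

lemma two_mul_le_of_forall_mul_sub_mul_sq_le {a q : ℝ}
    (h : ∀ c ∈ Ioo (0 : ℝ) 1, c * q - a * c ^ 2 ≤ q - a) : 2 * a ≤ q := by
  have hlin : ∀ c ∈ Ioo (0 : ℝ) 1, a * (1 + c) ≤ q := fun c hc => by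
    nlinarith [h c hc, sub_pos.2 hc.2]
  have hlim : Tendsto (fun c => a * (1 + c)) (𝓝[<] 1) (𝓝 (2 * a)) := by
    have : Tendsto (fun c : ℝ => a * (1 + c)) (𝓝 1) (𝓝 (a * (1 + 1))) :=
      (continuous_const.mul (continuous_const.add continuous_id)).tendsto 1
    rw [one_add_one_eq_two, mul_comm a 2] at this
    exact this.mono_left nhdsWithin_le_nhds
  exact le_of_tendsto hlim (eventually_of_mem (Ioo_mem_nhdsLT one_pos) hlin)

lemma sqrt_le_inv_mul_sqrt_of_mul_le_add {lam a p b r : ℝ} (hlam : 0 < lam)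
    (ha : lam * a ≤ p + r) (hp : p ≤ lam / 2 * a + (2 * lam)⁻¹ * b) :
    √a ≤ lam⁻¹ * √(b + 2 * lam * r) := by
  have hsq : lam ^ 2 * a ≤ b + 2 * lam * r := by
    have : 2 * lam * p ≤ lam ^ 2 * a + b := by field_simp at hp; linarith
    nlinarith
  rw [← Real.sqrt_sq (inv_nonneg.2 hlam.le), ← Real.sqrt_mul (sq_nonneg _)]
  refine Real.sqrt_le_sqrt ?_
  rw [inv_pow, ← div_eq_inv_mul, le_div_iff₀ (by positivity)]
  linarith

lemma continuous_integral_mul_of_memLp_two {Ω E : Type*} [TopologicalSpace Ω]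
    [FirstCountableTopology Ω] [CompactSpace Ω] [MeasurableSpace E] {ρ : Measure E}
    {φ : Ω → E → ℝ} (hφ_meas : ∀ ω, AEStronglyMeasurable (φ ω) ρ)
    (hφ_cont : ∀ᵐ x ∂ρ, Continuous fun ω => φ ω x)
    (hφ_int : Integrable (fun x => (⨆ ω, |φ ω x|) ^ 2) ρ) {α : E → ℝ} (hα : MemLp α 2 ρ) :
    Continuous fun ω => ∫ x, φ ω x * α x ∂ρ := by
  set g := fun x => ⨆ ω, |φ ω x|
  have hg_nonneg : ∀ x, 0 ≤ g x := fun x => Real.iSup_nonneg fun ω => abs_nonneg _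
  have hg_meas : AEStronglyMeasurable g ρ :=
    (Real.continuous_sqrt.comp_aestronglyMeasurable hφ_int.1).congr
      (ae_of_all _ fun x => Real.sqrt_sq (hg_nonneg x))
  have hg : MemLp g 2 ρ := (memLp_two_iff_integrable_sq hg_meas).2 hφ_int
  refine continuous_of_dominated (bound := fun x => g x * ‖α x‖)
    (fun ω => (hφ_meas ω).mul hα.1) (fun ω => ?_) (hg.integrable_mul hα.norm) ?_
  · filter_upwards [hφ_cont] with x hx
    rw [norm_mul, Real.norm_eq_abs]
    gcongr
    exact le_ciSup (isCompact_range hx.abs).bddAbove ω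
  · filter_upwards [hφ_cont] with x hx
    exact hx.mul continuous_const

theorem stmt_11_general
    {Ω : Type*} [MetricSpace Ω] [CompactSpace Ω] [MeasurableSpace Ω] [BorelSpace Ω]
    {d : ℕ}
    (μ : Measure Ω) [IsProbabilityMeasure μ]
    (ρ : Measure (EuclideanSpace ℝ (Fin d)))
    (Y : EuclideanSpace ℝ (Fin d) → ℝ) (hY : MemLp Y 2 ρ)
    (φ : Ω → EuclideanSpace ℝ (Fin d) → ℝ)
    (hφ_meas : Measurable (Function.uncurry φ))
    (hφ_cont : ∀ᵐ x ∂ρ, Continuous fun ω => φ ω x)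
    (hφ_int : Integrable (fun x => (⨆ ω, |φ ω x|) ^ 2) ρ)
    (f : ℝ → ℝ)
    (hf_nonneg : ∀ t, 0 ≤ f t)
    (hf_super : Tendsto (fun t : ℝ => f t / |t|) (cocompact ℝ) atTop)
    (fs : ℝ → ℝ) (hfs : ∀ s, fs s = ⨆ t : ℝ, (s * t - f t))
    (lam : ℝ) (hlam : 0 < lam)
    -- the adjoint operator Φ^⊤
    (T : (EuclideanSpace ℝ (Fin d) → ℝ) → Ω → ℝ)
    (hT : ∀ α ω, T α ω = ∫ x, φ ω x * α x ∂ρ)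
    -- the dual objective
    (D : (EuclideanSpace ℝ (Fin d) → ℝ) → ℝ)
    (hD : ∀ α, D α = -(∫ ω, fs (T α ω) ∂μ) + (∫ x, α x * Y x ∂ρ)
        - lam / 2 * ∫ x, (α x) ^ 2 ∂ρ)
    -- α₀ is the (unique) dual maximizer
    (α₀ : EuclideanSpace ℝ (Fin d) → ℝ)
    (hα₀ : MemLp α₀ 2 ρ)
    (hmax : ∀ α, MemLp α 2 ρ → D α ≤ D α₀) :
    Real.sqrt (∫ x, (α₀ x) ^ 2 ∂ρ)
      ≤ lam⁻¹ * Real.sqrt ((∫ x, (Y x) ^ 2 ∂ρ) + 2 * lam * f 0) := by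
  obtain rfl : fs = legendreTransform f := funext hfs
  have hbdd := bddAbove_range_mul_sub_of_superlinear hf_nonneg hf_super
  have hu : Continuous (T α₀) := by
    rw [funext (hT α₀)]
    exact continuous_integral_mul_of_memLp_two
      (fun ω => (hφ_meas.comp measurable_prodMk_left).aestronglyMeasurable) hφ_cont hφ_int hα₀
  have hint (c : ℝ) : Integrable (fun ω => legendreTransform f (c * T α₀ ω)) μ :=
    ((continuous_legendreTransform hbdd).comp (continuous_const.mul hu))
      |>.integrable_of_hasCompactSupport (HasCompactSupport.of_compactSpace _)
  have hint_one : Integrable (fun ω => legendreTransform f (T α₀ ω)) μ := by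
    simpa using hint 1
  set A := ∫ x, α₀ x ^ 2 ∂ρ
  set P := ∫ x, α₀ x * Y x ∂ρ
  set I := ∫ ω, legendreTransform f (T α₀ ω) ∂μ
  have hscale (c : ℝ) (hc : c ∈ Ioo (0 : ℝ) 1) :
      c * (P - I) - lam / 2 * A * c ^ 2 ≤ P - I - lam / 2 * A := by
    have hconv := integral_comp_mul_le_of_convexOn (convexOn_legendreTransform hbdd)
      (legendreTransform_zero_nonpos hf_nonneg) hc.1.le hc.2.le hint_one (hint c)
    have hDc : D (fun x => c * α₀ x)
        = -∫ ω, legendreTransform f (c * T α₀ ω) ∂μ + c * P - lam / 2 * A * c ^ 2 := by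
      simp only [hD, hT, mul_left_comm _ c, mul_assoc c, mul_pow, integral_const_mul]
      ring
    have hle := hmax _ (hα₀.const_mul c)
    rw [hDc, hD] at hle
    linarith
  have hI : -f 0 ≤ I := by
    simpa [probReal_univ] using integral_mono (integrable_const (-f 0)) hint_one
      fun ω => by simpa using mul_sub_le_legendreTransform hbdd (T α₀ ω) 0
  refine sqrt_le_inv_mul_sqrt_of_mul_le_add hlam ?_ (integral_mul_le_of_memLp_two hα₀ hY hlam)
  linarith [two_mul_le_of_forall_mul_sub_mul_sq_le hscale]

/-- Norm bound for the dual maximizer: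
`‖α^λ_f[μ]‖_{L²(ρ)} ≤ λ⁻¹ (‖Y‖²_{L²(ρ)} + 2λ f(0))^{1/2}`. -/
theorem stmt_11
    {Ω : Type*} [MetricSpace Ω] [CompactSpace Ω] [MeasurableSpace Ω] [BorelSpace Ω]
    {d : ℕ}
    (μ : Measure Ω) [IsProbabilityMeasure μ]
    (ρ : Measure (EuclideanSpace ℝ (Fin d))) [IsProbabilityMeasure ρ]
    (Y : EuclideanSpace ℝ (Fin d) → ℝ) (hY : MemLp Y 2 ρ)
    (φ : Ω → EuclideanSpace ℝ (Fin d) → ℝ)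
    (hφ_meas : Measurable (Function.uncurry φ))
    (hφ_cont : ∀ᵐ x ∂ρ, Continuous fun ω => φ ω x)
    (hφ_int : Integrable (fun x => (⨆ ω, |φ ω x|) ^ 2) ρ)
    (f : ℝ → ℝ)
    (hf_nonneg : ∀ t, 0 ≤ f t)
    (hf_conv : StrictConvexOn ℝ Set.univ f)
    (hf_super : Tendsto (fun t : ℝ => f t / |t|) (cocompact ℝ) atTop)
    (fs : ℝ → ℝ) (hfs : ∀ s, fs s = ⨆ t : ℝ, (s * t - f t))
    (lam : ℝ) (hlam : 0 < lam)
    -- the adjoint operator Φ^⊤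
    (T : (EuclideanSpace ℝ (Fin d) → ℝ) → Ω → ℝ)
    (hT : ∀ α ω, T α ω = ∫ x, φ ω x * α x ∂ρ)
    -- the dual objective
    (D : (EuclideanSpace ℝ (Fin d) → ℝ) → ℝ)
    (hD : ∀ α, D α = -(∫ ω, fs (T α ω) ∂μ) + (∫ x, α x * Y x ∂ρ)
        - lam / 2 * ∫ x, (α x) ^ 2 ∂ρ)
    -- α₀ is the (unique) dual maximizer
    (α₀ : EuclideanSpace ℝ (Fin d) → ℝ)
    (hα₀ : MemLp α₀ 2 ρ)
    (hmax : ∀ α, MemLp α 2 ρ → D α ≤ D α₀) :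
    Real.sqrt (∫ x, (α₀ x) ^ 2 ∂ρ)
      ≤ lam⁻¹ * Real.sqrt ((∫ x, (Y x) ^ 2 ∂ρ) + 2 * lam * f 0) :=
  stmt_11_general μ ρ Y hY φ hφ_meas hφ_cont hφ_int f hf_nonneg hf_super fs hfs lam hlam T hT D hD
    α₀ hα₀ hmax
end
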